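/- For the ECA rule 128, with local rule h(a,b,c) = a ∧ b ∧ c, and for every n ≥ 1: if two block-sequential update schedules τ and τ' are non-equivalent (lab_τ ≠ lab_τ'), then dset_τ(i) = dset_τ'(i) for every cell i ∈ ℤ/nℤ if and only if f^{(τ)} = f^{(τ')}, i.e. the two dynamics are identical. -/

import Mathlib

/-- One round of a block-sequential update: all cells of rank `k` are updated
simultaneously by the ECA local rule `h`, reading the current states. -/
def ecaStep (n : ℕ) (h : Bool → Bool → Bool → Bool) (τ : ZMod n → ℕ) (k : ℕ)
    (x : ZMod n → Bool) : ZMod n → Bool :=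
  fun i => if τ i = k then h (x (i - 1)) (x i) (x (i + 1)) else x i

/-- State after processing ranks `0, 1, …, k` in increasing order. -/
def ecaUpTo (n : ℕ) (h : Bool → Bool → Bool → Bool) (τ : ZMod n → ℕ) :
    ℕ → (ZMod n → Bool) → ZMod n → Bool
  | 0 => ecaStep n h τ 0
  | k + 1 => fun x => ecaStep n h τ (k + 1) (ecaUpTo n h τ k x)

/-- Asynchronous global function `f^{(τ)}` for the block-sequential update
schedule `τ : ZMod n → ℕ` (rank of each cell): a cell keeps the value it gets
in the round where it is updated (it is never updated again afterwards). -/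
def ecaAsync (n : ℕ) (h : Bool → Bool → Bool → Bool) (τ : ZMod n → ℕ)
    (x : ZMod n → Bool) : ZMod n → Bool :=
  fun i => ecaUpTo n h τ (τ i) x i

/-- Synchronous global function of the ECA with local rule `h`. -/
def ecaSync (n : ℕ) (h : Bool → Bool → Bool → Bool) (x : ZMod n → Bool) :
    ZMod n → Bool :=
  fun i => h (x (i - 1)) (x i) (x (i + 1))

/-- Label of the arc `(i, j)` for schedule `τ`:
`true` = ⊕ (τ i ≥ τ j), `false` = ⊖ (τ i < τ j). -/
def lab (n : ℕ) (τ : ZMod n → ℕ) (i j : ZMod n) : Bool :=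
  decide (τ j ≤ τ i)

/-- Length of the chain of influences to the left of cell `i`:
the largest `k ≥ 1` (it is at most `n`) such that the arcs
`(i-j, i-j+1)` are labeled ⊖ for all `0 < j < k`. -/
noncomputable def dleft (n : ℕ) (τ : ZMod n → ℕ) (i : ZMod n) : ℕ :=
  @Nat.findGreatest
    (fun k => 1 ≤ k ∧ ∀ j : ℕ, 0 < j → j < k →
      lab n τ (i - (j : ZMod n)) (i - (j : ZMod n) + 1) = false)
    (Classical.decPred _) n

/-- Length of the chain of influences to the right of cell `i`:
the largest `k ≥ 1` (it is at most `n`) such that the arcs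
`(i+j, i+j-1)` are labeled ⊖ for all `0 < j < k`. -/
noncomputable def dright (n : ℕ) (τ : ZMod n → ℕ) (i : ZMod n) : ℕ :=
  @Nat.findGreatest
    (fun k => 1 ≤ k ∧ ∀ j : ℕ, 0 < j → j < k →
      lab n τ (i + (j : ZMod n)) (i + (j : ZMod n) - 1) = false)
    (Classical.decPred _) n

/-- The set of cells the image at `i` depends on, under schedule `τ`. -/
noncomputable def dset (n : ℕ) (τ : ZMod n → ℕ) (i : ZMod n) : Set (ZMod n) :=
  {c | ∃ m : ℕ, m ≤ dleft n τ i ∧ c = i - (m : ZMod n)} ∪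
  {c | ∃ m : ℕ, m ≤ dright n τ i ∧ c = i + (m : ZMod n)}


/-! Unfolding the round in which cell `i` is updated gives
`f^{(τ)}(x)_i = h(y_{i-1}, x_i, y_{i+1})`, where a neighbour `j` contributes its new value
`f^{(τ)}(x)_j` if `τ j < τ i` and its old value `x_j` otherwise. The dependency sets satisfy the
matching recursion `dset(i) = {i} ∪ N(i-1) ∪ N(i+1)` with `N(j) = dset(j)` or `{j}` in the same two
cases; this needs that a chain of ⊖ arcs never closes up around the ring, since ranks strictly
increase along it. For rule 128 an induction on the rank then shows that `f^{(τ)}(x)_i` is the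
conjunction of `x` over `dset_τ(i)`. So the dependency sets determine the dynamics, and
conversely `dset_τ(i)` is recovered from the dynamics as the set of cells `c` such that switching
off `c` alone switches off `i`. -/

section Dynamics
variable {n : ℕ} (h : Bool → Bool → Bool → Bool) (τ : ZMod n → ℕ) (x : ZMod n → Bool)

theorem ecaUpTo_apply (k : ℕ) (j : ZMod n) :
    ecaUpTo n h τ k x j = if τ j ≤ k then ecaAsync n h τ x j else x j := by
  induction k with
  | zero =>
    by_cases hj : τ j = 0
    · simp [ecaUpTo, ecaStep, ecaAsync, hj]
    · simp [ecaUpTo, ecaStep, hj]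
  | succ k ih =>
    by_cases hj : τ j = k + 1
    · simp [ecaAsync, hj]
    · simp only [ecaUpTo, ecaStep, hj, if_false, ih]
      split_ifs <;> first | rfl | omega

theorem ecaAsync_apply (i : ZMod n) :
    ecaAsync n h τ x i =
      h (if τ (i - 1) < τ i then ecaAsync n h τ x (i - 1) else x (i - 1)) (x i)
        (if τ (i + 1) < τ i then ecaAsync n h τ x (i + 1) else x (i + 1)) := by
  change ecaUpTo n h τ (τ i) x i = _
  rcases hk : τ i with _ | k
  · simp [ecaUpTo, ecaStep, hk]
  · simp [ecaUpTo, ecaStep, hk, ecaUpTo_apply]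

end Dynamics

theorem Finite.not_forall_apply_lt {α β : Type*} [Finite α] [Nonempty α] [LinearOrder β]
    (f : α → β) (σ : α → α) : ¬ ∀ a, f (σ a) < f a := by
  obtain ⟨a, ha⟩ := Finite.exists_min f
  exact fun h => (h a).not_ge (ha _)

section Chains
variable {n : ℕ} (τ : ZMod n → ℕ)

theorem lab_eq_false_iff (a b : ZMod n) : lab n τ a b = false ↔ τ a < τ b := by
  simp [lab]

theorem dleft_eq_of_chain {i : ZMod n} {f : ℕ} (hf : 1 ≤ f) (hfn : f ≤ n)
    (hchain : ∀ j : ℕ, 0 < j → j < f → τ (i - j) < τ (i - j + 1))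
    (hstop : τ (i - f + 1) ≤ τ (i - f)) : dleft n τ i = f := by
  refine (@Nat.findGreatest_eq_iff _ _ _ (Classical.decPred _)).2
    ⟨hfn, fun _ => ⟨hf, by simpa [lab_eq_false_iff]⟩, ?_⟩
  rintro k hfk - ⟨-, hk⟩
  have := (lab_eq_false_iff τ _ _).1 (hk f (by omega) hfk)
  omega

theorem dleft_spec (hn : 1 ≤ n) (i : ZMod n) :
    1 ≤ dleft n τ i ∧ ∀ j : ℕ, 0 < j → j < dleft n τ i → τ (i - j) < τ (i - j + 1) := by
  have := @Nat.findGreatest_spec 1 (fun k => 1 ≤ k ∧ ∀ j : ℕ, 0 < j → j < k →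
      lab n τ (i - (j : ZMod n)) (i - (j : ZMod n) + 1) = false) (Classical.decPred _) n hn
    ⟨le_rfl, by omega⟩
  exact ⟨this.1, fun j hj hjd => (lab_eq_false_iff τ _ _).1 (this.2 j hj hjd)⟩

theorem rank_sub_dleft_add_one_le (hn : 1 ≤ n) {i : ZMod n} (h : dleft n τ i < n) :
    τ (i - dleft n τ i + 1) ≤ τ (i - dleft n τ i) := by
  obtain ⟨-, hchain⟩ := dleft_spec τ hn i
  have hmax : ¬ ∀ j : ℕ, 0 < j → j < dleft n τ i + 1 → τ (i - j) < τ (i - j + 1) := fun hall =>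
    @Nat.findGreatest_is_greatest _ _ (Classical.decPred _) _ (Nat.lt_succ_self _) h
      ⟨by omega, fun j hj hjd => (lab_eq_false_iff τ _ _).2 (hall j hj hjd)⟩
  push Not at hmax
  obtain ⟨j, hj, hjd, hstop⟩ := hmax
  obtain rfl : j = dleft n τ i := by
    by_contra hne
    exact (hchain j hj (by omega)).not_ge hstop
  exact hstop

theorem dleft_le (i : ZMod n) : dleft n τ i ≤ n :=
  @Nat.findGreatest_le _ (Classical.decPred _) n

theorem dleft_eq_one (hn : 1 ≤ n) {i : ZMod n} (h : τ i ≤ τ (i - 1)) : dleft n τ i = 1 :=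
  dleft_eq_of_chain τ le_rfl hn (by omega) (by simpa using h)

theorem dleft_eq_dleft_sub_one_add_one (hn : 1 ≤ n) {i : ZMod n} (h : τ (i - 1) < τ i) :
    dleft n τ i = dleft n τ (i - 1) + 1 := by
  obtain ⟨-, hchain⟩ := dleft_spec τ hn (i - 1)
  have shift : ∀ j : ℕ, i - ((j + 1 : ℕ) : ZMod n) = i - 1 - j := fun j => by push_cast; ring
  rcases (dleft_le τ (i - 1)).lt_or_eq with hlt | heq
  · refine dleft_eq_of_chain τ (by omega) hlt ?_
      (by rw [shift]; exact rank_sub_dleft_add_one_le τ hn hlt)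
    rintro (_ | j) hj hjd
    · omega
    rcases Nat.eq_zero_or_pos j with rfl | hj0
    · simpa using h
    · rw [shift]
      exact hchain j hj0 (by omega)
  · have : NeZero n := ⟨by omega⟩
    refine absurd (fun k => ?_) (Finite.not_forall_apply_lt τ (· - 1))
    obtain ⟨j, hj, rfl⟩ : ∃ j < n, k = i - j :=
      ⟨(i - k).val, ZMod.val_lt _, by rw [ZMod.natCast_zmod_val]; ring⟩
    rcases Nat.eq_zero_or_pos j with rfl | hj0
    · simpa using h
    · have := hchain j hj0 (by omega)
      rwa [sub_right_comm, sub_add_cancel] at this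

theorem dright_eq_dleft_neg (i : ZMod n) : dright n τ i = dleft n (fun j => τ (-j)) (-i) := by
  have e1 : ∀ j : ZMod n, -(-i - j + 1) = i + j - 1 := fun j => by ring
  have e2 : ∀ j : ZMod n, -(-i - j) = i + j := fun j => by ring
  unfold dright dleft
  congr 1
  ext k
  simp only [lab, e1, e2]

theorem dright_eq_one (hn : 1 ≤ n) {i : ZMod n} (h : τ i ≤ τ (i + 1)) : dright n τ i = 1 := by
  rw [dright_eq_dleft_neg]
  exact dleft_eq_one _ hn (by simpa [neg_sub_left, add_comm] using h)

theorem dright_eq_dright_add_one_add_one (hn : 1 ≤ n) {i : ZMod n} (h : τ (i + 1) < τ i) :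
    dright n τ i = dright n τ (i + 1) + 1 := by
  rw [dright_eq_dleft_neg, dright_eq_dleft_neg, neg_add', dleft_eq_dleft_sub_one_add_one _ hn]
  simpa [neg_sub_left, add_comm] using h

end Chains

theorem setOf_sub_natCast_le_succ {R : Type*} [AddCommGroupWithOne R] (a : R) (d : ℕ) :
    {c | ∃ m : ℕ, m ≤ d + 1 ∧ c = a - m} = insert a {c | ∃ m : ℕ, m ≤ d ∧ c = a - 1 - m} := by
  ext c
  constructor
  · rintro ⟨_ | m, hm, rfl⟩
    · simp
    · exact Or.inr ⟨m, by omega, by push_cast; abel⟩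
  · rintro (rfl | ⟨m, hm, rfl⟩)
    · exact ⟨0, by omega, by simp⟩
    · exact ⟨m + 1, by omega, by push_cast; abel⟩

theorem setOf_add_natCast_le_succ {R : Type*} [AddCommGroupWithOne R] (a : R) (d : ℕ) :
    {c | ∃ m : ℕ, m ≤ d + 1 ∧ c = a + m} = insert a {c | ∃ m : ℕ, m ≤ d ∧ c = a + 1 + m} := by
  ext c
  constructor
  · rintro ⟨_ | m, hm, rfl⟩
    · simp
    · exact Or.inr ⟨m, by omega, by push_cast; abel⟩
  · rintro (rfl | ⟨m, hm, rfl⟩)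
    · exact ⟨0, by omega, by simp⟩
    · exact ⟨m + 1, by omega, by push_cast; abel⟩

def dsetLeft (n : ℕ) (τ : ZMod n → ℕ) (i : ZMod n) : Set (ZMod n) :=
  {c | ∃ m : ℕ, m ≤ dleft n τ i ∧ c = i - (m : ZMod n)}

def dsetRight (n : ℕ) (τ : ZMod n → ℕ) (i : ZMod n) : Set (ZMod n) :=
  {c | ∃ m : ℕ, m ≤ dright n τ i ∧ c = i + (m : ZMod n)}

section DependencySets
variable {n : ℕ} (τ : ZMod n → ℕ)

theorem dsetLeft_eq (hn : 1 ≤ n) (i : ZMod n) :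
    dsetLeft n τ i = insert i (if τ (i - 1) < τ i then dsetLeft n τ (i - 1) else {i - 1}) := by
  split_ifs with h
  · rw [dsetLeft, dleft_eq_dleft_sub_one_add_one τ hn h, setOf_sub_natCast_le_succ]
    rfl
  · rw [dsetLeft, dleft_eq_one τ hn (not_lt.1 h), ← zero_add 1, setOf_sub_natCast_le_succ]
    simp

theorem dsetRight_eq (hn : 1 ≤ n) (i : ZMod n) :
    dsetRight n τ i = insert i (if τ (i + 1) < τ i then dsetRight n τ (i + 1) else {i + 1}) := by
  split_ifs with h
  · rw [dsetRight, dright_eq_dright_add_one_add_one τ hn h, setOf_add_natCast_le_succ]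
    rfl
  · rw [dsetRight, dright_eq_one τ hn (not_lt.1 h), ← zero_add 1, setOf_add_natCast_le_succ]
    simp

theorem insert_ite_dset_sub_one (hn : 1 ≤ n) (i : ZMod n) :
    insert i (if τ (i - 1) < τ i then dset n τ (i - 1) else {i - 1}) = dsetLeft n τ i := by
  rw [dsetLeft_eq τ hn]
  split_ifs with h
  · have hR : dsetRight n τ (i - 1) = {i - 1, i} := by
      rw [dsetRight_eq τ hn, if_neg (by simpa using h.le), sub_add_cancel]
    have hmem : i - 1 ∈ dsetLeft n τ (i - 1) := ⟨0, Nat.zero_le _, by simp⟩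
    change insert i (dsetLeft n τ (i - 1) ∪ dsetRight n τ (i - 1)) = _
    rw [hR, Set.union_insert, Set.insert_eq_of_mem (Set.mem_union_left _ hmem),
      Set.union_singleton, Set.insert_idem]
  · rfl

theorem insert_ite_dset_add_one (hn : 1 ≤ n) (i : ZMod n) :
    insert i (if τ (i + 1) < τ i then dset n τ (i + 1) else {i + 1}) = dsetRight n τ i := by
  rw [dsetRight_eq τ hn]
  split_ifs with h
  · have hL : dsetLeft n τ (i + 1) = {i + 1, i} := by
      rw [dsetLeft_eq τ hn, if_neg (by simpa using h.le), add_sub_cancel_right]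
    have hmem : i + 1 ∈ dsetRight n τ (i + 1) := ⟨0, Nat.zero_le _, by simp⟩
    change insert i (dsetLeft n τ (i + 1) ∪ dsetRight n τ (i + 1)) = _
    rw [hL, Set.insert_union, Set.insert_eq_of_mem (Set.mem_union_right _ hmem),
      Set.singleton_union, Set.insert_idem]
  · rfl

theorem dset_eq_insert (hn : 1 ≤ n) (i : ZMod n) :
    dset n τ i = insert i ((if τ (i - 1) < τ i then dset n τ (i - 1) else {i - 1}) ∪
      (if τ (i + 1) < τ i then dset n τ (i + 1) else {i + 1})) := by
  rw [Set.insert_union_distrib, insert_ite_dset_sub_one τ hn, insert_ite_dset_add_one τ hn]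
  rfl

end DependencySets

section Rule128
variable {n : ℕ} (τ : ZMod n → ℕ)

theorem rule128_ecaAsync_eq_true_iff (hn : 1 ≤ n) (x : ZMod n → Bool) (i : ZMod n) :
    ecaAsync n (fun a b c => a && b && c) τ x i = true ↔ dset n τ i ⊆ {c | x c = true} := by
  induction hk : τ i using Nat.strong_induction_on generalizing i with
  | _ k ih =>
    have IH : ∀ j, τ j < τ i → (ecaAsync n (fun a b c => a && b && c) τ x j = true ↔
        dset n τ j ⊆ {c | x c = true}) := fun j hj => ih _ (hk ▸ hj) j rfl
    rw [ecaAsync_apply, dset_eq_insert τ hn]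
    by_cases hl : τ (i - 1) < τ i <;> by_cases hr : τ (i + 1) < τ i <;>
      simp [hl, hr, IH, Set.insert_subset_iff, Set.union_subset_iff, and_assoc, and_comm,
        and_left_comm]

theorem mem_dset_iff (hn : 1 ≤ n) {i c : ZMod n} :
    c ∈ dset n τ i ↔
      ecaAsync n (fun a b c => a && b && c) τ (fun j => decide (j ≠ c)) i = false := by
  rw [← Bool.not_eq_true, rule128_ecaAsync_eq_true_iff τ hn]
  simp [Set.subset_def]

end Rule128

theorem rule_128_dset_iff_general (n : ℕ) (hn : 1 ≤ n) (τ τ' : ZMod n → ℕ) :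
    (∀ i : ZMod n, dset n τ i = dset n τ' i) ↔
      ecaAsync n (fun a b c => a && b && c) τ =
        ecaAsync n (fun a b c => a && b && c) τ' := by
  constructor
  · intro hdset
    funext x i
    rw [Bool.eq_iff_iff, rule128_ecaAsync_eq_true_iff τ hn, rule128_ecaAsync_eq_true_iff τ' hn,
      hdset]
  · intro heq i
    ext c
    rw [mem_dset_iff τ hn, mem_dset_iff τ' hn, heq]

/-- Rule 128 (h a b c = a ∧ b ∧ c): for non-equivalent schedules, the
dependency sets coincide at every cell iff the dynamics coincide. -/
theorem rule_128_dset_iff (n : ℕ) (hn : 1 ≤ n) (τ τ' : ZMod n → ℕ)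
    (hne : ∃ j k : ZMod n, (k = j + 1 ∨ k = j - 1) ∧ lab n τ j k ≠ lab n τ' j k) :
    (∀ i : ZMod n, dset n τ i = dset n τ' i) ↔
      ecaAsync n (fun a b c => a && b && c) τ =
        ecaAsync n (fun a b c => a && b && c) τ' :=
  rule_128_dset_iff_general n hn τ τ'
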